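/- Closed form for the weighted, repeated-argument, double, less-than sum: for every tuple (x_0, …, x_q) of real numbers and every real τ, one has Σ_{0 ≤ i ≤ j ≤ q} x_i · e^{-τ[x_0, …, x_q, x_i, x_j]} = (τ² x_0 / 2) · e^{-τ[x_0, …, x_q]} + (τ²/2) · e^{-τ[x_1, …, x_q]} − Σ_{i=1}^{q} i · e^{-τ[x_0, …, x_q, x_i]} when q ≥ 1, and equals (τ² x_0 / 2) e^{-τ x_0} when q = 0. -/

import Mathlib

open scoped BigOperators

/-- Complete homogeneous symmetric polynomial of degree `m` in the entries of the list `l`: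
`h_m(x_0, …, x_q) = Σ_{k_0+⋯+k_q = m} x_0^{k_0}⋯x_q^{k_q}` (with `h_0 = 1`). -/
noncomputable def hsymm (l : List ℝ) (m : ℕ) : ℝ :=
  ∑ k ∈ Finset.Nat.antidiagonalTuple l.length m, ∏ i : Fin l.length, l.get i ^ k i

/-- Divided difference of the exponential `e^{t[x_0, …, x_q]}` over the tuple given by the
list `l` (of length `q+1`), defined by its (absolutely convergent) series
`Σ_{m=0}^∞ (t^{q+m}/(q+m)!) · h_m(x_0, …, x_q)`; by convention it is `0` on the empty tuple. -/
noncomputable def dde (t : ℝ) (l : List ℝ) : ℝ :=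
  if l.length = 0 then 0
  else ∑' m : ℕ, t ^ (l.length - 1 + m) / (Nat.factorial (l.length - 1 + m)) * hsymm l m

/-- The sub-tuple `[x_a, …, x_b]` of the sequence `x`, as a list (empty if `b < a`). -/
def seg (x : ℕ → ℝ) (a b : ℕ) : List ℝ :=
  (List.range (b + 1 - a)).map (fun i => x (a + i))


/-!
Every DDE here is a power series in `t` whose coefficients are complete homogeneous symmetric
polynomials `h_m`, so the claim reduces to one identity between the `h_m` for each power of `t`.
Two facts about the `h_m` suffice, both read off from the generating function
`H(z) = Σ_m h_m(L) z^m = Π_{a ∈ L} 1 / (1 - a z)`: `h_m` is symmetric, and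
`Σ_{a ∈ L} h_m(a, L) = (|L| + m) h_m(L)`, the coefficient of `z^m` in
`H(z) Σ_a 1 / (1 - a z) = z H'(z) + |L| H(z)`.
The recursion `h_{m+1}(a, L) = a h_m(a, L) + h_{m+1}(L)` absorbs the weight `x_i`; by symmetry
the sum over `i ≤ j` is half of the full double sum plus half of the diagonal, and both are
evaluated by the identity above. The factor `(q+m+1)(q+m+2)` produced this way turns
`t^(q+m+2)/(q+m+2)!` into `t² · t^(q+m)/(q+m)!`, and the leading terms of the shifted series
cancel by Gauss's sum `1 + ⋯ + q = q(q+1)/2`.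
-/

open Finset PowerSeries
open scoped Nat

theorem hsymm_cons (a : ℝ) (l : List ℝ) (n : ℕ) :
    hsymm (a :: l) n = ∑ p ∈ antidiagonal n, a ^ p.1 * hsymm l p.2 := by
  simp only [hsymm, sum_eq_multiset_sum, Nat.antidiagonalTuple, List.length_cons]
  show (List.map _ (List.Nat.antidiagonalTuple (l.length + 1) n)).sum =
    (List.map _ (List.Nat.antidiagonal n)).sum
  simp only [List.Nat.antidiagonalTuple, List.flatMap, List.map_flatten, List.sum_flatten,
    List.map_map]
  refine congrArg List.sum (List.map_congr_left fun p _ => ?_)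
  show _ = a ^ p.1 * (List.map _ (List.Nat.antidiagonalTuple l.length p.2)).sum
  rw [← List.sum_map_mul_left, Function.comp_apply, Function.comp_apply, List.map_map]
  refine congrArg List.sum (List.map_congr_left fun k _ => ?_)
  simp [Fin.prod_univ_succ]

theorem hsymm_zero (l : List ℝ) : hsymm l 0 = 1 := by
  simp [hsymm, Nat.antidiagonalTuple_zero_right]

theorem hsymm_cons_succ (a : ℝ) (l : List ℝ) (n : ℕ) :
    hsymm (a :: l) (n + 1) = a * hsymm (a :: l) n + hsymm l (n + 1) := by
  rw [hsymm_cons, hsymm_cons, Nat.sum_antidiagonal_succ, add_comm, mul_sum]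
  simp only [pow_zero, one_mul, pow_succ]
  congr 1
  exact sum_congr rfl fun p _ => by ring

theorem mk_hsymm_nil : PowerSeries.mk (hsymm []) = 1 := by
  ext (_ | n) <;> simp [hsymm]

theorem mk_hsymm_cons (a : ℝ) (l : List ℝ) :
    PowerSeries.mk (hsymm (a :: l)) = PowerSeries.mk (a ^ ·) * PowerSeries.mk (hsymm l) := by
  ext n
  simp [coeff_mul, hsymm_cons]

theorem mk_hsymm (l : List ℝ) :
    PowerSeries.mk (hsymm l) = (l.map fun a => PowerSeries.mk (a ^ ·)).prod := by
  induction l with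
  | nil => exact mk_hsymm_nil
  | cons a l ih => rw [List.map_cons, List.prod_cons, ← ih, mk_hsymm_cons]

theorem hsymm_perm {l l' : List ℝ} (h : l.Perm l') : hsymm l = hsymm l' := by
  funext n
  simpa using congrArg (coeff n) ((mk_hsymm l).trans ((h.map _).prod_eq.trans (mk_hsymm l').symm))

theorem hsymm_singleton (a : ℝ) (n : ℕ) : hsymm [a] n = a ^ n := by
  simpa using congrArg (coeff n) (mk_hsymm [a])

theorem coeff_X_mul_derivative {R : Type*} [CommSemiring R] (f : R⟦X⟧) (n : ℕ) :
    coeff n (X * d⁄dX R f) = n * coeff n f := by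
  cases n with
  | zero => simp
  | succ n => rw [coeff_succ_X_mul, coeff_derivative, mul_comm]; push_cast; ring

theorem mk_pow_mul_self {R : Type*} [CommSemiring R] (a : R) :
    PowerSeries.mk (a ^ ·) * PowerSeries.mk (a ^ ·)
      = X * d⁄dX R (PowerSeries.mk (a ^ ·)) + PowerSeries.mk (a ^ ·) := by
  ext n
  rw [coeff_mul, map_add, coeff_X_mul_derivative, coeff_mk,
    sum_congr rfl fun p hp => by rw [coeff_mk, coeff_mk, ← pow_add, mem_antidiagonal.mp hp]]
  simp
  ring

theorem sum_mk_pow_mul_mk_hsymm (L : List ℝ) :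
    (L.map fun a => PowerSeries.mk (a ^ ·)).sum * PowerSeries.mk (hsymm L)
      = X * d⁄dX ℝ (PowerSeries.mk (hsymm L)) + L.length • PowerSeries.mk (hsymm L) := by
  induction L with
  | nil => simp [mk_hsymm_nil]
  | cons b L ih =>
    simp only [List.map_cons, List.sum_cons, List.length_cons, mk_hsymm_cons, Derivation.leibniz,
      smul_eq_mul, nsmul_eq_mul] at ih ⊢
    push_cast
    linear_combination PowerSeries.mk (b ^ ·) * ih + PowerSeries.mk (hsymm L) * mk_pow_mul_self b

theorem sum_hsymm_cons_self (L : List ℝ) (n : ℕ) :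
    (L.map fun a => hsymm (a :: L) n).sum = (L.length + n) * hsymm L n := by
  have h := congrArg (coeff n) (sum_mk_pow_mul_mk_hsymm L)
  simp only [← List.sum_map_mul_right, ← mk_hsymm_cons, map_list_sum, List.map_map,
    Function.comp_def, coeff_mk, map_add, map_nsmul, coeff_X_mul_derivative] at h
  rw [h, nsmul_eq_mul]
  ring

section IndexSums

variable {M : Type*} [AddCommMonoid M]

theorem sum_range_sum_Ico_eq_sum_nsmul (n : ℕ) (B : ℕ → M) :
    ∑ i ∈ range n, ∑ j ∈ Ico i n, B j = ∑ j ∈ range n, (j + 1) • B j := by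
  rw [range_eq_Ico, sum_Ico_Ico_comm]
  simp

theorem sum_range_sum_Ico_add_self_of_symm (n : ℕ) (F : ℕ → ℕ → M)
    (hF : ∀ i j, F i j = F j i) :
    (∑ i ∈ range n, ∑ j ∈ Ico i n, F i j) + ∑ i ∈ range n, ∑ j ∈ Ico i n, F i j
      = ∑ i ∈ range n, ∑ j ∈ range n, F i j + ∑ i ∈ range n, F i i := by
  have hlower : ∑ i ∈ range n, ∑ j ∈ Ico i n, F i j
      = ∑ i ∈ range n, ∑ j ∈ range (i + 1), F i j := by
    rw [range_eq_Ico, sum_Ico_Ico_comm, ← range_eq_Ico]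
    exact sum_congr rfl fun i _ => by rw [← range_eq_Ico]; exact sum_congr rfl fun j _ => hF j i
  calc _ = ∑ i ∈ range n, (∑ j ∈ range (i + 1), F i j + ∑ j ∈ Ico i n, F i j) := by
        rw [sum_add_distrib, ← hlower]
    _ = ∑ i ∈ range n, (∑ j ∈ range n, F i j + F i i) := sum_congr rfl fun i hi => by
        rw [sum_range_succ, add_right_comm, sum_range_add_sum_Ico _ (mem_range.mp hi).le]
    _ = _ := sum_add_distrib

end IndexSums

theorem length_seg (x : ℕ → ℝ) (a b : ℕ) : (seg x a b).length = b + 1 - a := by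
  simp [seg]

theorem seg_zero (x : ℕ → ℝ) (q : ℕ) : seg x 0 q = (List.range (q + 1)).map x := by
  simp [seg]

theorem seg_zero_eq_cons (x : ℕ → ℝ) (q : ℕ) : seg x 0 q = x 0 :: seg x 1 q := by
  simp [seg, List.range_succ_eq_map, Function.comp_def, add_comm]

theorem sum_map_seg_zero (x : ℕ → ℝ) (q : ℕ) (g : ℝ → ℝ) :
    ((seg x 0 q).map g).sum = ∑ i ∈ range (q + 1), g (x i) := by
  rw [seg_zero, List.map_map, sum_eq_multiset_sum]
  rfl

theorem sum_hsymm_cons_seg (x : ℕ → ℝ) (q n : ℕ) :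
    ∑ j ∈ range (q + 1), hsymm (x j :: seg x 0 q) n = (q + 1 + n) * hsymm (seg x 0 q) n := by
  rw [← sum_map_seg_zero x q (fun a => hsymm (a :: seg x 0 q) n), sum_hsymm_cons_self, length_seg]
  push_cast
  ring

theorem sum_hsymm_cons_cons_seg (x : ℕ → ℝ) (q n i : ℕ) :
    ∑ j ∈ range (q + 1), hsymm (x j :: x i :: seg x 0 q) n + hsymm (x i :: x i :: seg x 0 q) n
      = (q + 2 + n) * hsymm (x i :: seg x 0 q) n := by
  have h := sum_hsymm_cons_self (x i :: seg x 0 q) n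
  rw [List.map_cons, List.sum_cons, sum_map_seg_zero] at h
  rw [add_comm, h, List.length_cons, length_seg]
  push_cast
  ring

theorem sum_sum_hsymm_cons_cons_seg (x : ℕ → ℝ) (q n : ℕ) :
    ∑ i ∈ range (q + 1), ∑ j ∈ Ico i (q + 1), hsymm (x i :: x j :: seg x 0 q) n
      = (q + 1 + n) * (q + 2 + n) / 2 * hsymm (seg x 0 q) n := by
  have hsymmetric :
      ∀ i j, hsymm (x i :: x j :: seg x 0 q) n = hsymm (x j :: x i :: seg x 0 q) n :=
    fun i j => congrFun (hsymm_perm (List.Perm.swap _ _ _)) n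
  have hfull : ∑ i ∈ range (q + 1), ∑ j ∈ range (q + 1), hsymm (x i :: x j :: seg x 0 q) n
        + ∑ i ∈ range (q + 1), hsymm (x i :: x i :: seg x 0 q) n
      = (q + 2 + n) * ((q + 1 + n) * hsymm (seg x 0 q) n) := by
    rw [sum_comm, ← sum_add_distrib, sum_congr rfl fun i _ => sum_hsymm_cons_cons_seg x q n i,
      ← mul_sum, sum_hsymm_cons_seg]
  linear_combination ((sum_range_sum_Ico_add_self_of_symm (q + 1) _ hsymmetric).trans hfull) / 2

theorem sum_sum_mul_hsymm_cons_cons_seg (x : ℕ → ℝ) (q m : ℕ) :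
    ∑ i ∈ range (q + 1), ∑ j ∈ Icc i q, x i * hsymm (x i :: x j :: seg x 0 q) m
      = (q + m + 1) * (q + m + 2) / 2 * hsymm (seg x 0 q) (m + 1)
        - ∑ i ∈ Icc 1 q, (i : ℝ) * hsymm (x i :: seg x 0 q) (m + 1) := by
  have hstep : ∀ i j, x i * hsymm (x i :: x j :: seg x 0 q) m
      = hsymm (x i :: x j :: seg x 0 q) (m + 1) - hsymm (x j :: seg x 0 q) (m + 1) := by
    intro i j
    rw [hsymm_cons_succ]
    ring
  have hweights : ∑ i ∈ Icc 1 q, (i : ℝ) * hsymm (x i :: seg x 0 q) (m + 1)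
      = ∑ i ∈ range (q + 1), (i : ℝ) * hsymm (x i :: seg x 0 q) (m + 1) := by
    rw [range_eq_Ico, sum_eq_sum_Ico_succ_bot (Nat.succ_pos q)]
    simp [Ico_add_one_right_eq_Icc]
  rw [hweights]
  simp only [← Ico_add_one_right_eq_Icc, hstep, sum_sub_distrib, sum_sum_hsymm_cons_cons_seg,
    sum_range_sum_Ico_eq_sum_nsmul, nsmul_eq_mul]
  push_cast
  simp only [add_mul, one_mul, sum_add_distrib, sum_hsymm_cons_seg]
  push_cast
  ring

theorem card_antidiagonalTuple_le (k m : ℕ) : #(Nat.antidiagonalTuple k m) ≤ (2 ^ k) ^ m := by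
  have hsub : Nat.antidiagonalTuple k m ⊆ Fintype.piFinset fun _ : Fin k => range (m + 1) := by
    intro f hf
    rw [Nat.mem_antidiagonalTuple] at hf
    simp only [Fintype.mem_piFinset, mem_range, Nat.lt_succ_iff]
    exact fun i => hf ▸ single_le_sum (fun j _ => Nat.zero_le (f j)) (mem_univ i)
  calc #(Nat.antidiagonalTuple k m) ≤ (m + 1) ^ k := by
        simpa using card_le_card hsub
    _ ≤ (2 ^ m) ^ k := Nat.pow_le_pow_left Nat.lt_two_pow_self k
    _ = (2 ^ k) ^ m := by rw [← pow_mul, ← pow_mul, mul_comm]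

theorem abs_hsymm_le (l : List ℝ) (m : ℕ) :
    |hsymm l m| ≤ (2 ^ l.length * ∑ i, |l.get i|) ^ m := by
  set R := ∑ i, |l.get i|
  have hterm : ∀ k ∈ Nat.antidiagonalTuple l.length m, |∏ i, l.get i ^ k i| ≤ R ^ m := by
    intro k hk
    rw [abs_prod, ← Nat.mem_antidiagonalTuple.mp hk, ← prod_pow_eq_pow_sum]
    exact prod_le_prod (fun i _ => abs_nonneg _) fun i _ => by
      rw [abs_pow]
      exact pow_le_pow_left₀ (abs_nonneg _)
        (single_le_sum (f := fun i => |l.get i|) (fun _ _ => abs_nonneg _) (mem_univ i)) _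
  calc |hsymm l m| ≤ ∑ k ∈ Nat.antidiagonalTuple l.length m, |∏ i, l.get i ^ k i| :=
        abs_sum_le_sum_abs _ _
    _ ≤ #(Nat.antidiagonalTuple l.length m) • R ^ m := sum_le_card_nsmul _ _ _ hterm
    _ ≤ ((2 ^ l.length) ^ m : ℕ) • R ^ m :=
        nsmul_le_nsmul_left (by positivity) (card_antidiagonalTuple_le _ _)
    _ = (2 ^ l.length * R) ^ m := by rw [nsmul_eq_mul, mul_pow]; push_cast; rfl

theorem summable_pow_div_factorial_mul_hsymm (t : ℝ) (l : List ℝ) (c : ℕ) :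
    Summable fun m => t ^ (c + m) / (c + m)! * hsymm l m := by
  set B := 2 ^ l.length * ∑ i, |l.get i|
  refine Summable.of_norm_bounded ((Real.summable_pow_div_factorial (B * |t|)).mul_left (|t| ^ c))
    fun m => ?_
  have hfact : (m ! : ℝ) ≤ (c + m)! := by exact_mod_cast Nat.factorial_le (Nat.le_add_left m c)
  calc ‖t ^ (c + m) / (c + m)! * hsymm l m‖ = |t| ^ c * |t| ^ m / (c + m)! * |hsymm l m| := by
        rw [Real.norm_eq_abs, abs_mul, abs_div, abs_pow, pow_add, Nat.abs_cast]
    _ ≤ |t| ^ c * |t| ^ m / m ! * B ^ m := by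
        gcongr
        exact abs_hsymm_le l m
    _ = |t| ^ c * ((B * |t|) ^ m / m !) := by ring

theorem hasSum_dde (t : ℝ) {l : List ℝ} {n : ℕ} (hl : l.length = n + 1) :
    HasSum (fun m => t ^ (n + m) / (n + m)! * hsymm l m) (dde t l) := by
  rw [dde, if_neg (by omega), hl, Nat.add_sub_cancel]
  exact (summable_pow_div_factorial_mul_hsymm t l n).hasSum

theorem hasSum_dde_sub (t : ℝ) {l : List ℝ} {n : ℕ} (hl : l.length = n + 1) :
    HasSum (fun m => t ^ (n + 1 + m) / (n + 1 + m)! * hsymm l (m + 1)) (dde t l - t ^ n / n !) := by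
  have h := (hasSum_nat_add_iff' 1).mpr (hasSum_dde t hl)
  simpa [hsymm_zero, add_assoc, add_comm 1] using h

theorem dde_perm (t : ℝ) {l l' : List ℝ} (h : l.Perm l') : dde t l = dde t l' := by
  simp only [dde, h.length_eq, hsymm_perm h]

theorem pow_div_factorial_add_two_mul (t : ℝ) (n : ℕ) :
    t ^ (n + 2) / (n + 2)! * ((n + 1) * (n + 2)) = t ^ 2 * (t ^ n / n !) := by
  rw [Nat.factorial_succ, Nat.factorial_succ]
  push_cast
  field_simp
  ring

theorem sum_Icc_mul_pow_div_factorial (t : ℝ) (n : ℕ) :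
    ∑ i ∈ Icc 1 (n + 1), (i : ℝ) * (t ^ (n + 2) / (n + 2)!) = t ^ 2 / 2 * (t ^ n / n !) := by
  have hgauss : ∀ k : ℕ, ∑ i ∈ Icc 1 k, (i : ℝ) = k * (k + 1) / 2 := by
    intro k
    induction k with
    | zero => simp
    | succ k ih => rw [sum_Icc_succ_top (by omega), ih]; push_cast; ring
  rw [← sum_mul, hgauss]
  push_cast
  linear_combination (pow_div_factorial_add_two_mul t n) / 2

theorem sum_sum_mul_pow_div_factorial_mul_hsymm (x : ℕ → ℝ) (t : ℝ) (n m : ℕ) :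
    ∑ i ∈ range (n + 2), ∑ j ∈ Icc i (n + 1),
        x i * (t ^ (n + 3 + m) / (n + 3 + m)! * hsymm (x i :: x j :: seg x 0 (n + 1)) m)
      = t ^ 2 * x 0 / 2 * (t ^ (n + 1 + m) / (n + 1 + m)! * hsymm (seg x 0 (n + 1)) m)
        + t ^ 2 / 2 * (t ^ (n + 1 + m) / (n + 1 + m)! * hsymm (seg x 1 (n + 1)) (m + 1))
        - ∑ i ∈ Icc 1 (n + 1), (i : ℝ) * (t ^ (n + 2 + 1 + m) / (n + 2 + 1 + m)!
            * hsymm (x i :: seg x 0 (n + 1)) (m + 1)) := by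
  set L := seg x 0 (n + 1)
  have hcons : hsymm L (m + 1) = x 0 * hsymm L m + hsymm (seg x 1 (n + 1)) (m + 1) := by
    rw [show L = x 0 :: seg x 1 (n + 1) from seg_zero_eq_cons x (n + 1), hsymm_cons_succ]
  have hshift := pow_div_factorial_add_two_mul t (n + 1 + m)
  rw [show n + 1 + m + 2 = n + 3 + m by ring] at hshift
  push_cast at hshift
  rw [show n + 2 + 1 + m = n + 3 + m by ring]
  set c := t ^ (n + 3 + m) / (n + 3 + m)!
  calc _ = c * ∑ i ∈ range (n + 2), ∑ j ∈ Icc i (n + 1),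
          x i * hsymm (x i :: x j :: L) m := by
        simp only [mul_sum]
        exact sum_congr rfl fun i _ => sum_congr rfl fun j _ => mul_left_comm _ _ _
    _ = c * ((n + 1 + m + 1) * (n + 1 + m + 2) / 2 * hsymm L (m + 1))
        - ∑ i ∈ Icc 1 (n + 1), (i : ℝ) * (c * hsymm (x i :: L) (m + 1)) := by
        rw [sum_sum_mul_hsymm_cons_cons_seg, mul_sub, mul_sum]
        push_cast
        exact congrArg _ (sum_congr rfl fun i _ => mul_left_comm _ _ _)
    _ = _ := by
        rw [hcons]
        linear_combination (x 0 * hsymm L m + hsymm (seg x 1 (n + 1)) (m + 1)) / 2 * hshift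

theorem sum_sum_mul_dde_append_pair (x : ℕ → ℝ) (t : ℝ) (n : ℕ) :
    ∑ i ∈ range (n + 2), ∑ j ∈ Icc i (n + 1), x i * dde t (seg x 0 (n + 1) ++ [x i, x j])
      = t ^ 2 * x 0 / 2 * dde t (seg x 0 (n + 1)) + t ^ 2 / 2 * dde t (seg x 1 (n + 1))
        - ∑ i ∈ Icc 1 (n + 1), (i : ℝ) * dde t (seg x 0 (n + 1) ++ [x i]) := by
  have hL : (seg x 0 (n + 1)).length = n + 1 + 1 := by simp [length_seg]
  have hL' : (seg x 1 (n + 1)).length = n + 1 := by simp [length_seg]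
  simp only [fun a => dde_perm t (List.perm_append_singleton a (seg x 0 (n + 1))),
    fun a b => dde_perm t (List.perm_append_comm (l₁ := seg x 0 (n + 1)) (l₂ := [a, b])),
    List.cons_append, List.nil_append]
  have hlhs := hasSum_sum fun i (_ : i ∈ range (n + 2)) =>
    hasSum_sum fun j (_ : j ∈ Icc i (n + 1)) =>
      (hasSum_dde t (l := x i :: x j :: seg x 0 (n + 1)) (n := n + 3) (by simp [hL])).mul_left (x i)
  have hrhs := (((hasSum_dde t hL).mul_left (t ^ 2 * x 0 / 2)).add
    ((hasSum_dde_sub t hL').mul_left (t ^ 2 / 2))).sub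
    (hasSum_sum fun i (_ : i ∈ Icc 1 (n + 1)) =>
      (hasSum_dde_sub t (l := x i :: seg x 0 (n + 1)) (n := n + 2) (by simp [hL])).mul_left
        (i : ℝ))
  simp only [sum_sum_mul_pow_div_factorial_mul_hsymm] at hlhs
  rw [hlhs.unique hrhs]
  simp only [mul_sub, sum_sub_distrib, sum_Icc_mul_pow_div_factorial]
  ring

theorem hsymm_triple (a : ℝ) (m : ℕ) : hsymm [a, a, a] m = (m + 1) * (m + 2) / 2 * a ^ m := by
  have h1 := sum_hsymm_cons_self [a] m
  have h2 := sum_hsymm_cons_self [a, a] m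
  simp only [List.map_cons, List.map_nil, List.sum_cons, List.sum_nil, add_zero, List.length_cons,
    List.length_nil, hsymm_singleton] at h1 h2
  push_cast at h1 h2
  linear_combination h2 / 2 + (m + 2) / 2 * h1

theorem dde_triple (t a : ℝ) : dde t [a, a, a] = t ^ 2 / 2 * Real.exp (t * a) := by
  have hexp := (NormedSpace.expSeries_div_hasSum_exp (t * a)).mul_left (t ^ 2 / 2)
  rw [← Real.exp_eq_exp_ℝ] at hexp
  refine (hasSum_dde t (l := [a, a, a]) (n := 2) rfl).unique (hexp.congr_fun fun m => ?_)
  rw [hsymm_triple, add_comm 2 m]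
  linear_combination (a ^ m / 2) * pow_div_factorial_add_two_mul t m

/-- **Closed form for the weighted, repeated-argument, double, less-than sum**: for every tuple
`(x_0, …, x_q)` and real `τ`, `Σ_{0≤i≤j≤q} x_i e^{-τ[x_0,…,x_q,x_i,x_j]}` equals
`(τ²x_0/2) e^{-τ[x_0,…,x_q]} + (τ²/2) e^{-τ[x_1,…,x_q]} − Σ_{i=1}^q i·e^{-τ[x_0,…,x_q,x_i]}`
when `q ≥ 1`, and `(τ²x_0/2) e^{-τx_0}` when `q = 0`. -/
theorem weighted_repeated_double_lessthan_sum_closed_form (q : ℕ) (x : ℕ → ℝ) (τ : ℝ) :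
    (1 ≤ q →
      ∑ i ∈ Finset.range (q + 1), ∑ j ∈ Finset.Icc i q,
          x i * dde (-τ) (seg x 0 q ++ [x i, x j])
        = (τ ^ 2 * x 0 / 2) * dde (-τ) (seg x 0 q)
          + (τ ^ 2 / 2) * dde (-τ) (seg x 1 q)
          - ∑ i ∈ Finset.Icc 1 q, (i : ℝ) * dde (-τ) (seg x 0 q ++ [x i]))
    ∧ (q = 0 →
      x 0 * dde (-τ) [x 0, x 0, x 0] = (τ ^ 2 * x 0 / 2) * Real.exp (-τ * x 0)) := by
  refine ⟨fun hq => ?_, fun _ => ?_⟩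
  · obtain ⟨n, rfl⟩ := Nat.exists_eq_add_of_le' hq
    simpa only [neg_sq] using sum_sum_mul_dde_append_pair x (-τ) n
  · rw [dde_triple, neg_sq]
    ring
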